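/- In the random graph G(n, ⌊cn⌋) with i.i.d. bounded edge weights, for every ε > 0, with probability tending to 1 as n → ∞: LPM⁰(n,c) − εn ≤ M_w(n,c,b) ≤ LPM⁰(n,c). In particular M_w(n,c,b) ≤ LPM⁰(n,c) always, and P(M_w(n,c,b) ≥ LPM⁰(n,c) − εn) → 1. -/

import Mathlib

open MeasureTheory ProbabilityTheory Filter Finset

noncomputable section
open scoped Classical

/-- The sample space for the weighted sparse random graph on `n` labelled vertices:
an edge set (a finite set of unordered pairs of vertices) together with a weight attached to
every potential edge. -/
abbrev GraphInst (n : ℕ) : Type := Finset (Sym2 (Fin n)) × (Sym2 (Fin n) → ℝ)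

instance (n : ℕ) : MeasurableSpace (Finset (Sym2 (Fin n))) := ⊤

/-- The collection of edge sets of simple graphs on `n` labelled vertices with exactly `m`
edges: `m` unordered pairs of distinct vertices. -/
def validEdgeSets (n m : ℕ) : Set (Finset (Sym2 (Fin n))) :=
  { E | E.card = m ∧ ∀ e ∈ E, ¬ e.IsDiag }

/-- The law of the weighted random graph `G(n, m)`: the edge set is uniform among all simple
graphs on `n` labelled vertices with exactly `m` edges, and the edge weights are i.i.d. with
law `μW`, independent of the edge set. -/
def graphMeasure (n m : ℕ) (μW : Measure ℝ) : Measure (GraphInst n) :=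
  (uniformOn (validEdgeSets n m)).prod (Measure.pi fun _ : Sym2 (Fin n) => μW)

/-- The maximum weight of a `b`-matching of the weighted graph `ω`: a set of edges such that
every vertex is incident to at most `b` of them, of maximal total weight. -/
def bMatchingVal (n b : ℕ) (ω : GraphInst n) : ℝ :=
  sSup { v : ℝ | ∃ M : Finset (Sym2 (Fin n)), M ⊆ ω.1 ∧
    (∀ i : Fin n, (M.filter (fun e => i ∈ e)).card ≤ b) ∧
    v = ∑ e ∈ M, ω.2 e }

/-- The optimal value `LPM⁰` of the degree-constrained fractional `b`-matching linear program on
the weighted graph `ω`: maximize `Σ_e W_e x_e` subject to `Σ_{e ∋ i} x_e ≤ b` for every vertex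
`i` and `0 ≤ x_e ≤ 1` for every edge `e`. -/
def LPM0val (n b : ℕ) (ω : GraphInst n) : ℝ :=
  sSup { v : ℝ | ∃ x : Sym2 (Fin n) → ℝ,
    (∀ e ∈ ω.1, 0 ≤ x e ∧ x e ≤ 1) ∧
    (∀ i : Fin n, ∑ e ∈ ω.1.filter (fun e => i ∈ e), x e ≤ (b : ℝ)) ∧
    v = ∑ e ∈ ω.1, ω.2 e * x e }

/-!
A fractional `b`-matching can be pushed, without losing weight, along directions that keep all
tight vertex constraints tight until it becomes a vertex of the polytope. At a vertex, a rank
count against the tight vertices (each meeting at least two fractional edges, as `b` is an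
integer) shows that the fractional edges form vertex-disjoint cycles. Cutting one edge of a
cycle and re-optimising makes the whole cycle integral, at a cost of at most `B_w`, so the LP
optimum exceeds the best `b`-matching by at most `B_w` times the number of cycles. Cycles with at
least `L` edges number at most `m / L`; shorter ones are few because `G(n, ⌊cn⌋)` contains on
average only `O_L(1)` unions of short cycles, so by Markov's inequality there are `o(n)` of them
with high probability.
-/

/-- A pair `(a, r)` stands for the constraint `a + t * r ≤ 0` along a ray `t ≥ 0`. -/
theorem exists_max_step_of_affine (s : Finset (ℝ × ℝ))
    (hs : ∀ c ∈ s, c.1 ≤ 0 ∧ (0 < c.2 → c.1 < 0)) (hpos : ∃ c ∈ s, 0 < c.2) :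
    ∃ t > 0, (∀ c ∈ s, c.1 + t * c.2 ≤ 0) ∧ ∃ c ∈ s, 0 < c.2 ∧ c.1 + t * c.2 = 0 := by
  obtain ⟨c₀, hc₀, hmin⟩ := exists_min_image {c ∈ s | 0 < c.2} (fun c => -c.1 / c.2)
    (by simpa [Finset.Nonempty] using hpos)
  obtain ⟨hc₀s, hc₀pos⟩ := mem_filter.1 hc₀
  have ht : 0 < -c₀.1 / c₀.2 := div_pos (neg_pos.2 ((hs c₀ hc₀s).2 hc₀pos)) hc₀pos
  refine ⟨-c₀.1 / c₀.2, ht, fun c hc => ?_, c₀, hc₀s, hc₀pos, by field_simp; ring⟩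
  rcases lt_or_ge 0 c.2 with hc2 | hc2
  · have h := hmin c (mem_filter.2 ⟨hc, hc2⟩)
    rw [div_le_div_iff₀ hc₀pos hc2] at h
    have : -c₀.1 / c₀.2 * c.2 ≤ -c.1 := by
      rw [div_mul_eq_mul_div, div_le_iff₀ hc₀pos]; linarith
    linarith
  · nlinarith [(hs c hc).1]

theorem card_le_card_of_forall_sum_mul_eq_zero {α β : Type*} (F : Finset α) (T : Finset β)
    (A : β → α → ℝ)
    (h : ∀ d : α → ℝ, (∀ e ∉ F, d e = 0) → (∀ i ∈ T, ∑ e ∈ F, A i e * d e = 0) → d = 0) :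
    #F ≤ #T := by
  let M : Matrix T F ℝ := fun i e => A i e
  have hinj : Function.Injective M.mulVecLin := by
    rw [← LinearMap.ker_eq_bot, LinearMap.ker_eq_bot']
    intro g hg
    let d : α → ℝ := fun e => if he : e ∈ F then g ⟨e, he⟩ else 0
    have hd : d = 0 := h d (fun e he => dif_neg he) fun i hi => by
      have := congr_fun hg ⟨i, hi⟩
      simp only [M, Pi.zero_apply] at this
      rw [← sum_coe_sort, ← this]
      exact sum_congr rfl fun e _ => by simp [d]
    funext e
    simpa [d] using congr_fun hd e
  simpa using LinearMap.finrank_le_finrank_of_injective hinj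

theorem sum_eq_card_filter_eq_one {ι : Type*} (s : Finset ι) (f : ι → ℝ)
    (h : ∀ e ∈ s, f e = 0 ∨ f e = 1) : ∑ e ∈ s, f e = #{e ∈ s | f e = 1} := by
  rw [← sum_boole]
  exact sum_congr rfl fun e he => by rcases h e he with h | h <;> simp [h]

theorem eq_zero_or_eq_two_of_sum_le {ι : Type*} [Fintype ι] (f : ι → ℕ) (T : Finset ι)
    (hT : ∀ i ∈ T, 2 ≤ f i) (hsum : ∑ i, f i ≤ 2 * #T) (i : ι) : f i = 0 ∨ f i = 2 := by
  have hT2 : 2 * #T ≤ ∑ j ∈ T, f j := by simpa [mul_comm] using card_nsmul_le_sum T f 2 hT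
  by_cases hi : i ∈ T
  · refine Or.inr (by_contra fun hne => ?_)
    have hlt : ∑ _j ∈ T, 2 < ∑ j ∈ T, f j :=
      sum_lt_sum hT ⟨i, hi, (hT i hi).lt_of_ne (Ne.symm hne)⟩
    have := sum_le_sum_of_subset (f := f) (subset_univ T)
    simp only [sum_const, smul_eq_mul] at hlt
    omega
  · have hle := sum_le_sum_of_subset (f := f) (subset_univ (insert i T))
    rw [sum_insert hi] at hle
    omega

theorem Nat.choose_sub_mul_pow_le {N m k : ℕ} (hkm : k ≤ m) (hkN : k ≤ N) :
    (N - k).choose (m - k) * N ^ k ≤ N.choose m * m ^ k := by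
  induction k with
  | zero => simp
  | succ k ih =>
    rcases lt_or_ge N m with hNm | hmN
    · simp [Nat.choose_eq_zero_of_lt (by omega : N - (k + 1) < m - (k + 1))]
    have key : (N - k) * (N - (k + 1)).choose (m - (k + 1)) = (N - k).choose (m - k) * (m - k) := by
      have := Nat.add_one_mul_choose_eq (N - (k + 1)) (m - (k + 1))
      rwa [show N - (k + 1) + 1 = N - k by omega, show m - (k + 1) + 1 = m - k by omega] at this
    have hmk : (m - k) * N ≤ m * (N - k) := by
      zify [(by omega : k ≤ m), (by omega : k ≤ N)]; nlinarith
    refine Nat.le_of_mul_le_mul_left ?_ (by omega : 0 < N - k)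
    calc (N - k) * ((N - (k + 1)).choose (m - (k + 1)) * N ^ (k + 1))
        = (N - k).choose (m - k) * N ^ k * ((m - k) * N) := by rw [← mul_assoc, key]; ring
      _ ≤ (N - k).choose (m - k) * N ^ k * (m * (N - k)) := Nat.mul_le_mul_left _ hmk
      _ ≤ N.choose m * m ^ k * (m * (N - k)) := Nat.mul_le_mul_right _ (ih (by omega) (by omega))
      _ = (N - k) * (N.choose m * m ^ (k + 1)) := by ring

/-- The hypergeometric tail: a uniform `m`-subset of `s` contains a given `t ⊆ s` with probability
at most `(m / #s) ^ #t`. -/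
theorem Finset.card_filter_superset_mul_pow_le {α : Type*} [DecidableEq α] {s t : Finset α}
    (hts : t ⊆ s) (m : ℕ) :
    #{u ∈ s.powersetCard m | t ⊆ u} * #s ^ #t ≤ #(s.powersetCard m) * m ^ #t := by
  rcases lt_or_ge m #t with hlt | hle
  · have : {u ∈ s.powersetCard m | t ⊆ u} = ∅ := filter_eq_empty_iff.2 fun u hu htu =>
      (card_le_card htu).not_gt ((mem_powersetCard.1 hu).2 ▸ hlt)
    simp [this]
  have hinj : #{u ∈ s.powersetCard m | t ⊆ u} ≤ #((s \ t).powersetCard (m - #t)) := by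
    refine card_le_card_of_injOn (· \ t) (fun u hu => ?_) fun u hu v hv huv => ?_
    · rw [mem_coe, mem_filter, mem_powersetCard] at hu
      rw [mem_coe, mem_powersetCard]
      exact ⟨sdiff_subset_sdiff hu.1.1 le_rfl, by rw [card_sdiff_of_subset hu.2, hu.1.2]⟩
    · rw [mem_coe, mem_filter] at hu hv
      rw [← sdiff_union_of_subset hu.2, ← sdiff_union_of_subset hv.2]
      exact congrArg (· ∪ t) huv
  rw [card_powersetCard, card_sdiff_of_subset hts] at hinj
  rw [card_powersetCard]
  exact (Nat.mul_le_mul_right _ hinj).trans (Nat.choose_sub_mul_pow_le hle (card_le_card hts))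

namespace FracBMatching

variable {V : Type*}

def objective (E : Finset (Sym2 V)) (w x : Sym2 V → ℝ) : ℝ := ∑ e ∈ E, w e * x e

def fracEdges (E : Finset (Sym2 V)) (x : Sym2 V → ℝ) : Finset (Sym2 V) :=
  {e ∈ E | x e ≠ 0 ∧ x e ≠ 1}

theorem objective_add_smul (E : Finset (Sym2 V)) (w x d : Sym2 V → ℝ) (t : ℝ) :
    objective E w (x + t • d) = objective E w x + t * objective E w d := by
  simp only [objective, Pi.add_apply, Pi.smul_apply, smul_eq_mul, mul_add, sum_add_distrib,
    mul_sum]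
  congr 1
  exact sum_congr rfl fun _ _ => by ring

theorem fracEdges_add_smul_subset {E : Finset (Sym2 V)} {x d : Sym2 V → ℝ}
    (hd : ∀ e, d e ≠ 0 → e ∈ fracEdges E x) (t : ℝ) :
    fracEdges E (x + t • d) ⊆ fracEdges E x := fun e he => by
  by_cases hde : d e = 0
  · simpa [fracEdges, hde] using he
  · exact hd e hde

variable [DecidableEq V]

def edgeDegree (F : Finset (Sym2 V)) (i : V) : ℕ := #{e ∈ F | i ∈ e}

def IsCycleUnion (F : Finset (Sym2 V)) : Prop := ∀ i, edgeDegree F i = 0 ∨ edgeDegree F i = 2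

def load (E : Finset (Sym2 V)) (x : Sym2 V → ℝ) (i : V) : ℝ := ∑ e ∈ E with i ∈ e, x e

def IsFracBMatching (b : ℕ) (E : Finset (Sym2 V)) (x : Sym2 V → ℝ) : Prop :=
  (∀ e ∈ E, 0 ≤ x e ∧ x e ≤ 1) ∧ ∀ i, load E x i ≤ b

def IsFreeDirection (b : ℕ) (E : Finset (Sym2 V)) (x d : Sym2 V → ℝ) : Prop :=
  (∀ e, d e ≠ 0 → e ∈ fracEdges E x) ∧ ∀ i, load E d i = 0 ∨ load E x i < b

def shortCycleUnions (L : ℕ) (S : Finset (Sym2 V)) : Finset (Finset (Sym2 V)) :=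
  {C ∈ S.powerset | IsCycleUnion C ∧ #C < L}

variable {b : ℕ} {E : Finset (Sym2 V)} {w x d : Sym2 V → ℝ}

theorem edgeDegree_mono {F F' : Finset (Sym2 V)} (h : F ⊆ F') (i : V) :
    edgeDegree F i ≤ edgeDegree F' i :=
  card_le_card (filter_subset_filter _ h)

theorem load_add_smul (E : Finset (Sym2 V)) (x d : Sym2 V → ℝ) (t : ℝ) (i : V) :
    load E (x + t • d) i = load E x i + t * load E d i := by
  simp [load, sum_add_distrib, mul_sum]

theorem load_eq_load_of_support {F : Finset (Sym2 V)} (hFE : F ⊆ E)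
    (hd : ∀ e, d e ≠ 0 → e ∈ F) (i : V) : load E d i = load F d i :=
  (sum_subset (filter_subset_filter _ hFE) fun e heE he =>
    by_contra fun hde => he (mem_filter.2 ⟨hd e hde, (mem_filter.1 heE).2⟩)).symm

theorem IsFreeDirection.neg (hd : IsFreeDirection b E x d) : IsFreeDirection b E x (-d) :=
  ⟨fun e he => hd.1 e (by simpa using he), fun i => by simpa [load] using hd.2 i⟩

theorem IsFracBMatching.mem_fracEdges_iff (hx : IsFracBMatching b E x) {e : Sym2 V} :
    e ∈ fracEdges E x ↔ e ∈ E ∧ 0 < x e ∧ x e < 1 := by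
  simp only [fracEdges, mem_filter]
  constructor
  · rintro ⟨he, h0, h1⟩
    exact ⟨he, (hx.1 e he).1.lt_of_ne' h0, (hx.1 e he).2.lt_of_ne h1⟩
  · rintro ⟨he, h0, h1⟩
    exact ⟨he, h0.ne', h1.ne⟩

theorem IsFracBMatching.add_smul (hx : IsFracBMatching b E x)
    (hd : ∀ e, d e ≠ 0 → e ∈ fracEdges E x) {t : ℝ}
    (hbox : ∀ e ∈ fracEdges E x, 0 ≤ x e + t * d e ∧ x e + t * d e ≤ 1)
    (hload : ∀ i, load E x i + t * load E d i ≤ b) : IsFracBMatching b E (x + t • d) := by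
  refine ⟨fun e he => ?_, fun i => by rw [load_add_smul]; exact hload i⟩
  by_cases hde : d e = 0
  · simpa [hde] using hx.1 e he
  · simpa using hbox e (hd e hde)

theorem IsFracBMatching.two_le_edgeDegree (hx : IsFracBMatching b E x) {i : V}
    (hi : load E x i = b) (hdeg : edgeDegree (fracEdges E x) i ≠ 0) :
    2 ≤ edgeDegree (fracEdges E x) i := by
  by_contra hlt
  obtain ⟨e₀, he₀⟩ := card_eq_one.1 (show edgeDegree (fracEdges E x) i = 1 by omega)
  have he₀F : e₀ ∈ fracEdges E x := (mem_filter.1 (he₀ ▸ mem_singleton_self e₀)).1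
  have hfrac : {e ∈ {e ∈ E | i ∈ e} | e ∈ fracEdges E x} = {e₀} := by
    rw [← he₀]; ext e; simp only [fracEdges, mem_filter]; tauto
  have hint : ∀ e ∈ {e ∈ {e ∈ E | i ∈ e} | e ∉ fracEdges E x}, x e = 0 ∨ x e = 1 := by
    intro e he
    simp only [fracEdges, mem_filter, not_and, not_not] at he
    by_cases h0 : x e = 0
    · exact Or.inl h0
    · exact Or.inr (he.2 he.1.1 h0)
  -- `x e₀ = b - K` with `K` the number of edges at `i` carrying `1`, yet `0 < x e₀ < 1`
  have hsplit := sum_filter_add_sum_filter_not {e ∈ E | i ∈ e} (· ∈ fracEdges E x) x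
  rw [hfrac, sum_singleton, sum_eq_card_filter_eq_one _ _ hint] at hsplit
  have hb : load E x i = b := hi
  unfold load at hb
  obtain ⟨-, h0, h1⟩ := hx.mem_fracEdges_iff.1 he₀F
  set K := #{e ∈ {e ∈ {e ∈ E | i ∈ e} | e ∉ fracEdges E x} | x e = 1}
  have hKb : K < b := by exact_mod_cast (by linarith : (K : ℝ) < b)
  have hbK : b < K + 1 := by exact_mod_cast (by linarith : (b : ℝ) < K + 1)
  omega

theorem IsCycleUnion.inter {F C C' : Finset (Sym2 V)} (hF : IsCycleUnion F)
    (hC : IsCycleUnion C) (hC' : IsCycleUnion C') (hCF : C ⊆ F) (hC'F : C' ⊆ F) :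
    IsCycleUnion (C ∩ C') := by
  intro i
  -- at a vertex where `X ⊆ F` has degree 2, `X` contains both edges of `F` at that vertex
  have hfull : ∀ X ⊆ F, IsCycleUnion X → edgeDegree X i ≠ 0 →
      {e ∈ X | i ∈ e} = {e ∈ F | i ∈ e} := fun X hXF hX hXi =>
    eq_of_subset_of_card_le (filter_subset_filter _ hXF) <| by
      have := edgeDegree_mono hXF i
      have := (hX i).resolve_left hXi
      rcases hF i with h | h <;> simp only [edgeDegree] at * <;> omega
  by_cases h : edgeDegree C i = 0 ∨ edgeDegree C' i = 0
  · refine Or.inl ?_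
    rcases h with h | h
    · exact Nat.eq_zero_of_le_zero (h ▸ edgeDegree_mono inter_subset_left i)
    · exact Nat.eq_zero_of_le_zero (h ▸ edgeDegree_mono inter_subset_right i)
  · push Not at h
    refine Or.inr ?_
    rw [edgeDegree, filter_inter_distrib, hfull C hCF hC h.1, hfull C' hC'F hC' h.2, inter_self]
    exact (hF i).resolve_left fun h0 => h.1 (Nat.eq_zero_of_le_zero (h0 ▸ edgeDegree_mono hCF i))

theorem IsFracBMatching.update_zero (hx : IsFracBMatching b E x) (a : Sym2 V) :
    IsFracBMatching b E (Function.update x a 0) := by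
  have hle : ∀ e ∈ E, Function.update x a 0 e ≤ x e := fun e he => by
    rcases eq_or_ne e a with rfl | hea
    · simpa using (hx.1 e he).1
    · simp [hea]
  refine ⟨fun e he => ?_, fun i =>
    (sum_le_sum fun e he => hle e (mem_filter.1 he).1).trans (hx.2 i)⟩
  rcases eq_or_ne e a with rfl | hea
  · simp
  · simpa [hea] using hx.1 e he

theorem fracEdges_update_zero (E : Finset (Sym2 V)) (x : Sym2 V → ℝ) (a : Sym2 V) :
    fracEdges E (Function.update x a 0) = (fracEdges E x).erase a := by
  ext e
  rcases eq_or_ne e a with rfl | hea <;> simp [fracEdges, *]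

theorem objective_update_zero {a : Sym2 V} (ha : a ∈ E) :
    objective E w (Function.update x a 0) = objective E w x - w a * x a := by
  rw [objective, objective, ← add_sum_erase _ _ ha, ← add_sum_erase _ _ ha]
  simp only [Function.update_self, mul_zero, zero_add]
  rw [add_sub_cancel_left]
  exact sum_congr rfl fun e he => by rw [Function.update_of_ne (ne_of_mem_erase he)]

theorem IsFracBMatching.exists_bMatching_of_fracEdges_eq_empty (hx : IsFracBMatching b E x)
    (h : fracEdges E x = ∅) :
    ∃ M ⊆ E, (∀ i, edgeDegree M i ≤ b) ∧ ∑ e ∈ M, w e = objective E w x := by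
  have hint : ∀ e ∈ E, x e = 0 ∨ x e = 1 := fun e he => by
    by_contra hne
    push Not at hne
    have : e ∈ fracEdges E x := mem_filter.2 ⟨he, hne⟩
    simp [h] at this
  refine ⟨{e ∈ E | x e = 1}, filter_subset _ _, fun i => ?_, ?_⟩
  · have := hx.2 i
    rw [load, sum_eq_card_filter_eq_one _ _ fun e he => hint e (mem_filter.1 he).1] at this
    rw [edgeDegree, filter_comm]
    exact_mod_cast this
  · rw [objective, sum_filter]
    exact sum_congr rfl fun e he => by rcases hint e he with h | h <;> simp [h]

/-- Removing a cycle union `C` costs one short cycle union or at least `L` edges. -/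
theorem card_shortCycleUnions_sdiff_add_le {L : ℕ} (hL : 0 < L) {S C : Finset (Sym2 V)}
    (hCS : C ⊆ S) (hC : IsCycleUnion C) (hne : C.Nonempty) :
    (#(shortCycleUnions L (S \ C)) : ℝ) + #(S \ C) / L + 1 ≤
      #(shortCycleUnions L S) + #S / L := by
  have hmono : shortCycleUnions L (S \ C) ⊆ shortCycleUnions L S :=
    filter_subset_filter _ (powerset_mono.2 sdiff_subset)
  have hcard : (#(S \ C) : ℝ) = #S - #C := by
    rw [card_sdiff_of_subset hCS, Nat.cast_sub (card_le_card hCS)]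
  have hLpos : (0 : ℝ) < L := by exact_mod_cast hL
  rcases lt_or_ge #C L with hlt | hge
  · have hss : shortCycleUnions L (S \ C) ⊂ shortCycleUnions L S := by
      refine ssubset_iff_of_subset hmono |>.2 ⟨C, ?_, fun hC' => ?_⟩
      · simp [shortCycleUnions, hCS, hC, hlt]
      · obtain ⟨e, he⟩ := hne
        have := (mem_powerset.1 (mem_filter.1 hC').1) he
        simp [he] at this
    have h1 : (#(shortCycleUnions L (S \ C)) : ℝ) + 1 ≤ #(shortCycleUnions L S) := by
      exact_mod_cast card_lt_card hss
    have h2 : (#(S \ C) : ℝ) / L ≤ #S / L :=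
      div_le_div_of_nonneg_right (by exact_mod_cast card_le_card sdiff_subset) hLpos.le
    linarith
  · have h1 : (#(shortCycleUnions L (S \ C)) : ℝ) ≤ #(shortCycleUnions L S) := by
      exact_mod_cast card_le_card hmono
    have h2 : (#(S \ C) : ℝ) / L + 1 ≤ #S / L := by
      rw [hcard, div_add_one hLpos.ne', div_le_div_iff_of_pos_right hLpos]
      have : (L : ℝ) ≤ #C := by exact_mod_cast hge
      linarith
    linarith

theorem bddAbove_objective_image (b : ℕ) (E : Finset (Sym2 V)) (w : Sym2 V → ℝ) :
    BddAbove (objective E w '' {x | IsFracBMatching b E x}) := by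
  refine ⟨∑ e ∈ E, |w e|, ?_⟩
  rintro _ ⟨x, hx, rfl⟩
  refine sum_le_sum fun e he => ?_
  obtain ⟨h0, h1⟩ := hx.1 e he
  calc w e * x e ≤ |w e| * x e := mul_le_mul_of_nonneg_right (le_abs_self _) h0
    _ ≤ |w e| := mul_le_of_le_one_right (abs_nonneg _) h1

theorem image_bMatchings_subset (b : ℕ) (E : Finset (Sym2 V)) (w : Sym2 V → ℝ) :
    (fun M => ∑ e ∈ M, w e) '' {M | M ⊆ E ∧ ∀ i, edgeDegree M i ≤ b} ⊆
      objective E w '' {x | IsFracBMatching b E x} := by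
  rintro _ ⟨M, ⟨hME, hdeg⟩, rfl⟩
  refine ⟨fun e => if e ∈ M then 1 else 0,
    ⟨fun e _ => by dsimp only; split_ifs <;> norm_num, fun i => ?_⟩, ?_⟩
  · rw [load, sum_boole, filter_filter]
    have : {e ∈ E | i ∈ e ∧ e ∈ M} = {e ∈ M | i ∈ e} := by
      ext e; simp only [mem_filter]; exact ⟨fun h => ⟨h.2.2, h.2.1⟩, fun h => ⟨hME h.1, h.2, h.1⟩⟩
    rw [this]
    exact_mod_cast hdeg i
  · simp only [objective, mul_ite, mul_one, mul_zero]
    rw [← sum_filter, filter_mem_eq_inter, inter_eq_right.2 hME]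

theorem sum_card_shortCycleUnions_eq (L m : ℕ) (P : Finset (Sym2 V)) :
    ∑ E ∈ P.powersetCard m, #(shortCycleUnions L E) =
      ∑ C ∈ shortCycleUnions L P, #{E ∈ P.powersetCard m | C ⊆ E} := by
  have hbip := sum_card_bipartiteAbove_eq_sum_card_bipartiteBelow
    (fun (E C : Finset (Sym2 V)) => C ⊆ E) (s := P.powersetCard m) (t := shortCycleUnions L P)
  refine (sum_congr rfl fun E hE => congrArg card ?_).trans hbip
  have hEP := (mem_powersetCard.1 hE).1
  ext C
  simp only [shortCycleUnions, bipartiteAbove, mem_filter, mem_powerset]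
  exact ⟨fun h => ⟨⟨h.1.trans hEP, h.2⟩, h.1⟩, fun h => ⟨h.2, h.1.2⟩⟩

variable [Fintype V]

def slackVertices (b : ℕ) (E : Finset (Sym2 V)) (x : Sym2 V → ℝ) : Finset V :=
  {i | load E x i < b}

def tightVertices (b : ℕ) (E : Finset (Sym2 V)) (x : Sym2 V → ℝ) : Finset V :=
  {i | load E x i = b ∧ edgeDegree (fracEdges E x) i ≠ 0}

def potential (b : ℕ) (E : Finset (Sym2 V)) (x : Sym2 V → ℝ) : ℕ :=
  #(fracEdges E x) + #(slackVertices b E x)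

theorem slackVertices_add_smul_subset (hd : ∀ i, load E d i = 0 ∨ load E x i < b) (t : ℝ) :
    slackVertices b E (x + t • d) ⊆ slackVertices b E x := fun i hi => by
  simp only [slackVertices, mem_filter, mem_univ, true_and, load_add_smul] at hi ⊢
  rcases hd i with h | h
  · simpa [h] using hi
  · exact h

theorem potential_lt {y : Sym2 V → ℝ} (hfrac : fracEdges E y ⊆ fracEdges E x)
    (hslack : slackVertices b E y ⊆ slackVertices b E x)
    (h : (∃ e ∈ fracEdges E x, e ∉ fracEdges E y) ∨
      ∃ i ∈ slackVertices b E x, i ∉ slackVertices b E y) :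
    potential b E y < potential b E x := by
  have := card_le_card hfrac
  have := card_le_card hslack
  unfold potential
  rcases h with h | h
  · have := card_lt_card (ssubset_iff_of_subset hfrac |>.2 h); omega
  · have := card_lt_card (ssubset_iff_of_subset hslack |>.2 h); omega

theorem IsFracBMatching.exists_potential_lt (hx : IsFracBMatching b E x)
    (hd : IsFreeDirection b E x d) (hd0 : d ≠ 0) (hwd : 0 ≤ objective E w d) :
    ∃ y, IsFracBMatching b E y ∧ objective E w x ≤ objective E w y ∧
      fracEdges E y ⊆ fracEdges E x ∧ potential b E y < potential b E x := by
  -- the constraints met along the ray `x + t • d`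
  set s : Finset (ℝ × ℝ) := ((fracEdges E x).image fun e => (x e - 1, d e)) ∪
    ((fracEdges E x).image fun e => (-x e, -d e)) ∪
    (univ.image fun i => (load E x i - b, load E d i))
  have hs : ∀ c ∈ s, c.1 ≤ 0 ∧ (0 < c.2 → c.1 < 0) := by
    simp only [s, mem_union, mem_image, mem_univ, true_and]
    rintro c ((⟨e, he, rfl⟩ | ⟨e, he, rfl⟩) | ⟨i, rfl⟩) <;> dsimp only
    · have := (hx.mem_fracEdges_iff.1 he).2.2
      exact ⟨by linarith, fun _ => by linarith⟩
    · have := (hx.mem_fracEdges_iff.1 he).2.1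
      exact ⟨by linarith, fun _ => by linarith⟩
    · exact ⟨by linarith [hx.2 i], fun hpos => by linarith [(hd.2 i).resolve_left hpos.ne']⟩
  have hpos : ∃ c ∈ s, 0 < c.2 := by
    obtain ⟨e, he⟩ := Function.ne_iff.1 hd0
    simp only [s, mem_union, mem_image]
    rcases he.lt_or_gt with h | h
    · exact ⟨_, Or.inl (Or.inr ⟨e, hd.1 e he, rfl⟩), by simpa using h⟩
    · exact ⟨_, Or.inl (Or.inl ⟨e, hd.1 e he, rfl⟩), h⟩
  obtain ⟨t, ht, hall, c, hc, hc2, htight⟩ := exists_max_step_of_affine s hs hpos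
  have hy : IsFracBMatching b E (x + t • d) := hx.add_smul hd.1
    (fun e he => ⟨by linarith [hall _ (mem_union_left _ (mem_union_right _ (mem_image_of_mem _ he)))],
      by linarith [hall _ (mem_union_left _ (mem_union_left _ (mem_image_of_mem _ he)))]⟩)
    fun i => by linarith [hall _ (mem_union_right _ (mem_image_of_mem _ (mem_univ i)))]
  refine ⟨x + t • d, hy, by rw [objective_add_smul]; nlinarith, fracEdges_add_smul_subset hd.1 t,
    potential_lt (fracEdges_add_smul_subset hd.1 t) (slackVertices_add_smul_subset hd.2 t) ?_⟩
  -- the constraint that became tight removes a fractional edge or a slack vertex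
  simp only [s, mem_union, mem_image, mem_univ, true_and] at hc
  rcases hc with (⟨e, he, rfl⟩ | ⟨e, he, rfl⟩) | ⟨i, rfl⟩ <;> dsimp only at hc2 htight
  · refine Or.inl ⟨e, he, fun he' => ?_⟩
    simp only [fracEdges, mem_filter, Pi.add_apply, Pi.smul_apply, smul_eq_mul] at he'
    exact he'.2.2 (by linarith)
  · refine Or.inl ⟨e, he, fun he' => ?_⟩
    simp only [fracEdges, mem_filter, Pi.add_apply, Pi.smul_apply, smul_eq_mul] at he'
    exact he'.2.1 (by linarith)
  · refine Or.inr ⟨i, by simpa [slackVertices] using (hd.2 i).resolve_left hc2.ne', fun hi => ?_⟩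
    simp only [slackVertices, mem_filter, mem_univ, true_and, load_add_smul] at hi
    linarith

theorem sum_edgeDegree {F : Finset (Sym2 V)} (hF : ∀ e ∈ F, ¬e.IsDiag) :
    ∑ i, edgeDegree F i = 2 * #F := by
  calc ∑ i, edgeDegree F i = ∑ e ∈ F, #{i ∈ univ | i ∈ e} :=
        sum_card_bipartiteAbove_eq_sum_card_bipartiteBelow _
    _ = ∑ _e ∈ F, 2 := sum_congr rfl fun e he => by
        rw [← Sym2.card_toFinset_of_not_isDiag e (hF e he)]
        congr 1; ext; simp
    _ = 2 * #F := by rw [sum_const, smul_eq_mul, mul_comm]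

/-- Rank count: without free directions, fractional edges inject linearly into tight vertices. -/
theorem IsFracBMatching.card_fracEdges_le (hx : IsFracBMatching b E x)
    (hfree : ∀ d, IsFreeDirection b E x d → d = 0) :
    #(fracEdges E x) ≤ #(tightVertices b E x) := by
  refine card_le_card_of_forall_sum_mul_eq_zero _ _ (fun i e => if i ∈ e then 1 else 0)
    fun d hsupp hT => ?_
  have hsupp' : ∀ e, d e ≠ 0 → e ∈ fracEdges E x := fun e he => by_contra fun h => he (hsupp e h)
  refine hfree d ⟨hsupp', fun i => ?_⟩
  rw [load_eq_load_of_support (F := fracEdges E x) (filter_subset _ _) hsupp']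
  rcases (hx.2 i).lt_or_eq with h | h
  · exact Or.inr h
  refine Or.inl ?_
  by_cases hi : edgeDegree (fracEdges E x) i = 0
  · rw [load, show {e ∈ fracEdges E x | i ∈ e} = ∅ from card_eq_zero.1 hi, sum_empty]
  · rw [load, sum_filter]
    simpa only [ite_mul, one_mul, zero_mul] using hT i (by simp [tightVertices, h, hi])

theorem IsFracBMatching.isCycleUnion_fracEdges (hE : ∀ e ∈ E, ¬e.IsDiag)
    (hx : IsFracBMatching b E x) (hfree : ∀ d, IsFreeDirection b E x d → d = 0) :
    IsCycleUnion (fracEdges E x) := by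
  refine eq_zero_or_eq_two_of_sum_le _ (tightVertices b E x) (fun i hi => ?_) ?_
  · simp only [tightVertices, mem_filter, mem_univ, true_and] at hi
    exact hx.two_le_edgeDegree hi.1 hi.2
  · rw [sum_edgeDegree (F := fracEdges E x) fun e he => hE e (filter_subset _ _ he)]
    exact Nat.mul_le_mul_left 2 (hx.card_fracEdges_le hfree)

theorem IsFracBMatching.exists_isCycleUnion_fracEdges (hE : ∀ e ∈ E, ¬e.IsDiag)
    (hx : IsFracBMatching b E x) :
    ∃ y, IsFracBMatching b E y ∧ objective E w x ≤ objective E w y ∧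
      fracEdges E y ⊆ fracEdges E x ∧ IsCycleUnion (fracEdges E y) := by
  induction hk : potential b E x using Nat.strong_induction_on generalizing x with
  | _ k ih =>
  by_cases hfree : ∀ d, IsFreeDirection b E x d → d = 0
  · exact ⟨x, hx, le_rfl, subset_rfl, hx.isCycleUnion_fracEdges hE hfree⟩
  push Not at hfree
  obtain ⟨d, hd, hd0⟩ := hfree
  obtain ⟨y, hy, hxy, hyx, hlt⟩ : ∃ y, IsFracBMatching b E y ∧
      objective E w x ≤ objective E w y ∧ fracEdges E y ⊆ fracEdges E x ∧
      potential b E y < potential b E x := by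
    rcases le_total 0 (objective E w d) with hwd | hwd
    · exact hx.exists_potential_lt hd hd0 hwd
    · exact hx.exists_potential_lt hd.neg (neg_ne_zero.2 hd0) (by simpa [objective] using hwd)
  obtain ⟨z, hz, hyz, hzy, hcyc⟩ := ih _ (hk ▸ hlt) hy rfl
  exact ⟨z, hz, hxy.trans hyz, hzy.trans hyx, hcyc⟩

/-- Cut a minimal cycle `C` of the fractional support at an edge `a` and re-solve: the new
fractional support is a cycle union meeting `C` in a cycle union inside `C \ {a}`, hence not at
all. -/
theorem IsFracBMatching.exists_sdiff_cycle (hE : ∀ e ∈ E, ¬e.IsDiag) {B : ℝ} (hB : 0 ≤ B)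
    (hwB : ∀ e ∈ E, w e ≤ B) (hx : IsFracBMatching b E x) (hcyc : IsCycleUnion (fracEdges E x))
    (hne : (fracEdges E x).Nonempty) :
    ∃ C ⊆ fracEdges E x, C.Nonempty ∧ IsCycleUnion C ∧ ∃ z, IsFracBMatching b E z ∧
      objective E w x - B ≤ objective E w z ∧ fracEdges E z ⊆ fracEdges E x \ C := by
  obtain ⟨C, hCmem, hCmin⟩ := exists_min_image
    {C ∈ (fracEdges E x).powerset | C.Nonempty ∧ IsCycleUnion C} card
    ⟨fracEdges E x, by simp [hne, hcyc]⟩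
  simp only [mem_filter, mem_powerset] at hCmem hCmin
  obtain ⟨hCx, ⟨a, ha⟩, hC⟩ := hCmem
  have haE : a ∈ E := filter_subset _ _ (hCx ha)
  obtain ⟨z, hz, hxz, hzx, hzcyc⟩ :=
    (hx.update_zero a).exists_isCycleUnion_fracEdges (w := w) hE
  rw [fracEdges_update_zero] at hzx
  refine ⟨C, hCx, ⟨a, ha⟩, hC, z, hz, ?_, fun e he => mem_sdiff.2
    ⟨mem_of_mem_erase (hzx he), fun heC => ?_⟩⟩
  · rw [objective_update_zero haE] at hxz
    obtain ⟨h0, h1⟩ := hx.1 a haE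
    have : w a * x a ≤ B := by
      rcases le_total 0 (w a) with hw | hw
      · nlinarith [hwB a haE]
      · nlinarith
    linarith
  · have hinter : IsCycleUnion (fracEdges E z ∩ C) :=
      hcyc.inter hzcyc hC (hzx.trans (erase_subset _ _)) hCx
    have hsub : fracEdges E z ∩ C ⊆ C.erase a := fun e' he' =>
      mem_erase.2 ⟨ne_of_mem_erase (hzx (mem_inter.1 he').1), (mem_inter.1 he').2⟩
    have hmin := hCmin _ ⟨inter_subset_right.trans hCx, ⟨e, mem_inter.2 ⟨he, heC⟩⟩, hinter⟩
    have := card_le_card hsub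
    rw [card_erase_of_mem ha] at this
    have := card_pos.2 ⟨a, ha⟩
    omega

theorem IsFracBMatching.exists_bMatching_ge (hE : ∀ e ∈ E, ¬e.IsDiag) {B : ℝ} (hB : 0 ≤ B)
    (hwB : ∀ e ∈ E, w e ≤ B) {L : ℕ} (hL : 0 < L) (S : Finset (Sym2 V))
    (hx : IsFracBMatching b E x) (hxS : fracEdges E x ⊆ S) :
    ∃ M ⊆ E, (∀ i, edgeDegree M i ≤ b) ∧
      objective E w x - B * (#(shortCycleUnions L S) + #S / L) ≤ ∑ e ∈ M, w e := by
  induction S using Finset.strongInduction generalizing x with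
  | H S ih =>
  obtain ⟨y, hy, hxy, hyx, hcyc⟩ := hx.exists_isCycleUnion_fracEdges (w := w) hE
  have hyS := hyx.trans hxS
  rcases (fracEdges E y).eq_empty_or_nonempty with hempty | hne
  · obtain ⟨M, hME, hdeg, hM⟩ := hy.exists_bMatching_of_fracEdges_eq_empty (w := w) hempty
    refine ⟨M, hME, hdeg, ?_⟩
    have : 0 ≤ B * (#(shortCycleUnions L S) + #S / L) := by positivity
    linarith
  obtain ⟨C, hCy, hCne, hC, z, hz, hyz, hzC⟩ := hy.exists_sdiff_cycle hE hB hwB hcyc hne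
  have hCS := hCy.trans hyS
  obtain ⟨M, hME, hdeg, hM⟩ :=
    ih (S \ C) (sdiff_ssubset hCS hCne) hz (hzC.trans (sdiff_subset_sdiff hyS le_rfl))
  refine ⟨M, hME, hdeg, ?_⟩
  have := mul_le_mul_of_nonneg_left (card_shortCycleUnions_sdiff_add_le hL hCS hC hCne) hB
  linarith

theorem IsCycleUnion.card_support {C : Finset (Sym2 V)} (hC : IsCycleUnion C)
    (hloop : ∀ e ∈ C, ¬e.IsDiag) : #{i | edgeDegree C i ≠ 0} = #C := by
  have h : ∑ i ∈ ({i | edgeDegree C i ≠ 0} : Finset V), edgeDegree C i = 2 * #C :=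
    (sum_filter_of_ne fun _ _ h => h).trans (sum_edgeDegree hloop)
  rw [sum_congr rfl fun i hi => (hC i).resolve_left (mem_filter.1 hi).2, sum_const,
    smul_eq_mul] at h
  simp only [ne_eq] at h ⊢
  omega

/-- A cycle union with `k` edges lives on the `k` vertices it touches. -/
theorem card_isCycleUnion_le (k : ℕ) :
    #{C ∈ (⊤ : SimpleGraph V).edgeFinset.powerset | IsCycleUnion C ∧ #C = k} ≤
      (Fintype.card V).choose k * ((k + 1).choose 2).choose k := by
  calc _ ≤ #((univ.powersetCard k).biUnion fun U : Finset V => U.sym2.powersetCard k) :=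
        card_le_card ?_
    _ ≤ ∑ U ∈ univ.powersetCard k, #(U.sym2.powersetCard k) := card_biUnion_le
    _ = _ := by
        rw [sum_congr rfl fun U hU => by
          rw [card_powersetCard, card_sym2, (mem_powersetCard.1 hU).2]]
        rw [sum_const, card_powersetCard, card_univ, smul_eq_mul]
  intro C hC
  simp only [mem_filter, mem_powerset] at hC
  obtain ⟨hCtop, hCcyc, rfl⟩ := hC
  have hloop : ∀ e ∈ C, ¬e.IsDiag := fun e he => by simpa using hCtop he
  refine mem_biUnion.2 ⟨({i | edgeDegree C i ≠ 0} : Finset V),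
    mem_powersetCard.2 ⟨subset_univ _, hCcyc.card_support hloop⟩,
    mem_powersetCard.2 ⟨fun e he => mem_sym2_iff.2 fun i hi => ?_, rfl⟩⟩
  rw [mem_filter]
  exact ⟨mem_univ _, card_ne_zero_of_mem (mem_filter.2 ⟨he, hi⟩)⟩

theorem sum_card_shortCycleUnions_le (L m : ℕ) (hN : 0 < #(⊤ : SimpleGraph V).edgeFinset) :
    (∑ E ∈ (⊤ : SimpleGraph V).edgeFinset.powersetCard m, #(shortCycleUnions L E) : ℝ) ≤
      #((⊤ : SimpleGraph V).edgeFinset.powersetCard m) *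
        ∑ k ∈ range L, (((k + 1).choose 2).choose k : ℝ) *
          (Fintype.card V * m / #(⊤ : SimpleGraph V).edgeFinset) ^ k := by
  set P := (⊤ : SimpleGraph V).edgeFinset
  set 𝓔 := P.powersetCard m
  have hterm : ∀ C ∈ shortCycleUnions L P,
      (#{E ∈ 𝓔 | C ⊆ E} : ℝ) ≤ #𝓔 * (m / #P) ^ #C := by
    intro C hC
    have := card_filter_superset_mul_pow_le (mem_powerset.1 (mem_filter.1 hC).1) m
    rw [div_pow, mul_div_assoc', le_div_iff₀ (by positivity)]
    exact_mod_cast this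
  have hcount : ∀ k, (#{C ∈ shortCycleUnions L P | #C = k} : ℝ) ≤
      (Fintype.card V : ℝ) ^ k * ((k + 1).choose 2).choose k := by
    intro k
    have hsub : {C ∈ shortCycleUnions L P | #C = k} ⊆
        {C ∈ P.powerset | IsCycleUnion C ∧ #C = k} := fun C hC => by
      simp only [shortCycleUnions, mem_filter] at hC ⊢
      exact ⟨hC.1.1, hC.1.2.1, hC.2⟩
    exact_mod_cast ((card_le_card hsub).trans (card_isCycleUnion_le k)).trans
      (Nat.mul_le_mul_right _ (Nat.choose_le_pow _ k))
  calc (∑ E ∈ 𝓔, #(shortCycleUnions L E) : ℝ)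
      = ∑ C ∈ shortCycleUnions L P, (#{E ∈ 𝓔 | C ⊆ E} : ℝ) := by
        exact_mod_cast sum_card_shortCycleUnions_eq L m P
    _ ≤ ∑ C ∈ shortCycleUnions L P, #𝓔 * (m / #P : ℝ) ^ #C := sum_le_sum hterm
    _ = ∑ k ∈ range L, #{C ∈ shortCycleUnions L P | #C = k} * (#𝓔 * (m / #P : ℝ) ^ k) := by
        rw [← sum_fiberwise_of_maps_to fun C hC => mem_range.2 (mem_filter.1 hC).2.2]
        refine sum_congr rfl fun k _ => ?_
        rw [sum_congr rfl fun C hC => by rw [(mem_filter.1 hC).2], sum_const, nsmul_eq_mul]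
    _ ≤ ∑ k ∈ range L, (Fintype.card V : ℝ) ^ k * ((k + 1).choose 2).choose k *
          (#𝓔 * (m / #P : ℝ) ^ k) :=
        sum_le_sum fun k _ => mul_le_mul_of_nonneg_right (hcount k) (by positivity)
    _ = _ := by
        rw [mul_sum]
        refine sum_congr rfl fun k _ => ?_
        rw [mul_div_assoc, mul_pow]
        ring

theorem le_card_edgeFinset_top {m : ℕ} {c : ℝ} (hm : (m : ℝ) ≤ c * Fintype.card V)
    (hV : 2 * c + 1 ≤ Fintype.card V) : m ≤ #(⊤ : SimpleGraph V).edgeFinset := by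
  rw [SimpleGraph.card_edgeFinset_top_eq_card_choose_two]
  have : (m : ℝ) ≤ ((Fintype.card V).choose 2 : ℕ) := by
    rw [Nat.cast_choose_two]
    nlinarith
  exact_mod_cast this

theorem sum_card_shortCycleUnions_le_of_le_mul (L : ℕ) {m : ℕ} {c : ℝ}
    (hm : (m : ℝ) ≤ c * Fintype.card V) (hV : 2 ≤ Fintype.card V) :
    (∑ E ∈ (⊤ : SimpleGraph V).edgeFinset.powersetCard m, #(shortCycleUnions L E) : ℝ) ≤
      #((⊤ : SimpleGraph V).edgeFinset.powersetCard m) *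
        ∑ k ∈ range L, (((k + 1).choose 2).choose k : ℝ) * (4 * c) ^ k := by
  have hn : (2 : ℝ) ≤ Fintype.card V := by exact_mod_cast hV
  set n : ℝ := (Fintype.card V : ℝ)
  have hN : (#(⊤ : SimpleGraph V).edgeFinset : ℝ) = n * (n - 1) / 2 := by
    rw [SimpleGraph.card_edgeFinset_top_eq_card_choose_two, Nat.cast_choose_two]
  have hNpos : 0 < #(⊤ : SimpleGraph V).edgeFinset := by
    have : (0 : ℝ) < #(⊤ : SimpleGraph V).edgeFinset := by rw [hN]; nlinarith
    exact_mod_cast this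
  -- `n m / N ≤ 2 c n / (n - 1) ≤ 4 c`
  have hratio : n * m / #(⊤ : SimpleGraph V).edgeFinset ≤ 4 * c := by
    rw [hN, div_le_iff₀ (by nlinarith)]
    nlinarith [(m.cast_nonneg : (0 : ℝ) ≤ m)]
  refine (sum_card_shortCycleUnions_le L m hNpos).trans (mul_le_mul_of_nonneg_left
    (sum_le_sum fun k _ => mul_le_mul_of_nonneg_left ?_ (by positivity)) (by positivity))
  exact pow_le_pow_left₀ (by positivity) hratio k

end FracBMatching

open FracBMatching

theorem LPM0val_eq_sSup (n b : ℕ) (ω : GraphInst n) :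
    LPM0val n b ω = sSup (objective ω.1 ω.2 '' {x | IsFracBMatching b ω.1 x}) := by
  unfold LPM0val
  congr 1
  ext v
  simp [IsFracBMatching, load, objective, and_assoc, eq_comm]

theorem bMatchingVal_eq_sSup (n b : ℕ) (ω : GraphInst n) :
    bMatchingVal n b ω =
      sSup ((fun M => ∑ e ∈ M, ω.2 e) '' {M | M ⊆ ω.1 ∧ ∀ i, edgeDegree M i ≤ b}) := by
  unfold bMatchingVal
  congr 1
  ext v
  simp [edgeDegree, and_assoc, eq_comm]

theorem bMatchingVal_le_LPM0val (n b : ℕ) (ω : GraphInst n) :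
    bMatchingVal n b ω ≤ LPM0val n b ω := by
  rw [bMatchingVal_eq_sSup, LPM0val_eq_sSup]
  exact csSup_le_csSup (bddAbove_objective_image b ω.1 ω.2)
    ⟨0, ∅, ⟨empty_subset _, fun i => by simp [edgeDegree]⟩, by simp⟩
    (image_bMatchings_subset b ω.1 ω.2)

theorem LPM0val_le_bMatchingVal_add {n b L : ℕ} (hL : 0 < L) {ω : GraphInst n}
    (hE : ∀ e ∈ ω.1, ¬e.IsDiag) {B : ℝ} (hB : 0 ≤ B) (hwB : ∀ e ∈ ω.1, ω.2 e ≤ B) :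
    LPM0val n b ω ≤ bMatchingVal n b ω + B * (#(shortCycleUnions L ω.1) + #ω.1 / L) := by
  rw [LPM0val_eq_sSup]
  refine csSup_le ⟨_, 0, ⟨fun e _ => by simp, fun i => by simp [load]⟩, rfl⟩ ?_
  rintro _ ⟨x, hx, rfl⟩
  obtain ⟨M, hME, hdeg, hM⟩ := hx.exists_bMatching_ge hE hB hwB hL ω.1 (filter_subset _ _)
  have : ∑ e ∈ M, ω.2 e ≤ bMatchingVal n b ω := by
    rw [bMatchingVal_eq_sSup]
    exact le_csSup ((bddAbove_objective_image b ω.1 ω.2).mono (image_bMatchings_subset b ω.1 ω.2))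
      ⟨M, ⟨hME, hdeg⟩, rfl⟩
  linarith

theorem LPM0val_sub_le_bMatchingVal {n m b L T : ℕ} (hL : 0 < L) {c ε Bw : ℝ} (hBw : 0 ≤ Bw)
    (hLε : 2 * Bw * c ≤ ε * L) (hm : (m : ℝ) ≤ c * n) (hT : Bw * T ≤ ε * n / 2)
    {ω : GraphInst n} (hE : ω.1 ∈ (⊤ : SimpleGraph (Fin n)).edgeFinset.powersetCard m)
    (hX : #(shortCycleUnions L ω.1) ≤ T) (hW : ∀ e, ω.2 e ≤ Bw) :
    LPM0val n b ω - ε * n ≤ bMatchingVal n b ω := by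
  obtain ⟨hEtop, hcard⟩ := mem_powersetCard.1 hE
  have hgap := LPM0val_le_bMatchingVal_add (b := b) hL (fun e he => by simpa using hEtop he) hBw
    fun e _ => hW e
  have hLpos : (0 : ℝ) < L := by exact_mod_cast hL
  have h1 : Bw * #(shortCycleUnions L ω.1) ≤ ε * n / 2 :=
    (mul_le_mul_of_nonneg_left (by exact_mod_cast hX) hBw).trans hT
  have h2 : Bw * (#ω.1 / L) ≤ ε * n / 2 := by
    rw [hcard, mul_div_assoc', div_le_div_iff₀ hLpos two_pos]
    nlinarith [mul_le_mul_of_nonneg_left hm hBw,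
      mul_le_mul_of_nonneg_right hLε (n.cast_nonneg : (0 : ℝ) ≤ n)]
  rw [mul_add] at hgap
  linarith

theorem validEdgeSets_eq (n m : ℕ) :
    validEdgeSets n m = ↑((⊤ : SimpleGraph (Fin n)).edgeFinset.powersetCard m) := by
  ext E
  simp [validEdgeSets, subset_iff, and_comm]

instance (n m : ℕ) (μW : Measure ℝ) [IsProbabilityMeasure μW] :
    IsZeroOrProbabilityMeasure (graphMeasure n m μW) := by
  unfold graphMeasure
  rcases eq_zero_or_isProbabilityMeasure (uniformOn (validEdgeSets n m)) with h | h
  · rw [h, Measure.zero_prod]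
    infer_instance
  · infer_instance

theorem graphMeasure_prod_pi_Icc {n m : ℕ} (μW : Measure ℝ) [IsProbabilityMeasure μW] {Bw : ℝ}
    (hsupp : μW (Set.Icc 0 Bw) = 1) (A : Finset (Finset (Sym2 (Fin n)))) :
    graphMeasure n m μW (↑A ×ˢ Set.univ.pi fun _ => Set.Icc 0 Bw) =
      #((⊤ : SimpleGraph (Fin n)).edgeFinset.powersetCard m ∩ A) /
        #((⊤ : SimpleGraph (Fin n)).edgeFinset.powersetCard m) := by
  rw [graphMeasure, Measure.prod_prod, Measure.pi_pi, validEdgeSets_eq,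
    uniformOn_apply_finset' MeasurableSpace.measurableSet_top MeasurableSpace.measurableSet_top]
  simp [hsupp]

/-- Markov's inequality for the number of short cycle unions. -/
theorem one_sub_div_le_graphMeasure {n m L T : ℕ} (μW : Measure ℝ) [IsProbabilityMeasure μW]
    {Bw : ℝ} (hsupp : μW (Set.Icc 0 Bw) = 1) {K : ℝ}
    (hK : (∑ E ∈ (⊤ : SimpleGraph (Fin n)).edgeFinset.powersetCard m,
      #(shortCycleUnions L E) : ℝ) ≤ #((⊤ : SimpleGraph (Fin n)).edgeFinset.powersetCard m) * K)
    (hne : ((⊤ : SimpleGraph (Fin n)).edgeFinset.powersetCard m).Nonempty)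
    {G : Set (GraphInst n)}
    (hG : ∀ E ∈ (⊤ : SimpleGraph (Fin n)).edgeFinset.powersetCard m,
      #(shortCycleUnions L E) ≤ T → ∀ W : Sym2 (Fin n) → ℝ, (∀ e, W e ∈ Set.Icc 0 Bw) →
        (E, W) ∈ G) :
    1 - K / (T + 1) ≤ (graphMeasure n m μW G).toReal := by
  set 𝓔 := (⊤ : SimpleGraph (Fin n)).edgeFinset.powersetCard m
  set good := {E ∈ 𝓔 | #(shortCycleUnions L E) ≤ T}
  set bad := {E ∈ 𝓔 | ¬#(shortCycleUnions L E) ≤ T}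
  have hsub : ↑good ×ˢ (Set.univ.pi fun _ => Set.Icc 0 Bw) ⊆ G := by
    rintro ⟨E, W⟩ ⟨hE, hW⟩
    exact hG E (mem_filter.1 hE).1 (mem_filter.1 hE).2 W fun e => hW e (Set.mem_univ e)
  have hgood : (#good / #𝓔 : ℝ) ≤ (graphMeasure n m μW G).toReal := by
    have := ENNReal.toReal_mono (measure_ne_top (graphMeasure n m μW) G) (measure_mono hsub)
    rwa [graphMeasure_prod_pi_Icc μW hsupp, inter_eq_right.2 (filter_subset _ _),
      ENNReal.toReal_div, ENNReal.toReal_natCast, ENNReal.toReal_natCast] at this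
  have hmarkov : (#bad : ℝ) * (T + 1) ≤ #𝓔 * K := by
    have := card_nsmul_le_sum bad (fun E => (#(shortCycleUnions L E) : ℝ)) (T + 1) fun E hE => by
      exact_mod_cast (not_le.1 (mem_filter.1 hE).2 : T < _)
    rw [nsmul_eq_mul] at this
    exact this.trans ((sum_le_sum_of_subset_of_nonneg (filter_subset _ _)
      fun _ _ _ => Nat.cast_nonneg _).trans hK)
  have hsplit : (#good : ℝ) + #bad = #𝓔 := by exact_mod_cast card_filter_add_card_filter_not _
  have h𝓔 : (0 : ℝ) < #𝓔 := by exact_mod_cast hne.card_pos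
  have hbad : (#bad : ℝ) / #𝓔 ≤ K / (T + 1) := by
    rw [div_le_div_iff₀ h𝓔 (by positivity)]
    linarith
  have : (#good : ℝ) / #𝓔 = 1 - #bad / #𝓔 := by
    rw [eq_sub_iff_add_eq, ← add_div, hsplit, div_self h𝓔.ne']
  linarith

theorem one_sub_div_le_graphMeasure_lpGap {n b L T : ℕ} (hL : 0 < L) {c ε Bw : ℝ}
    (hBw : 0 ≤ Bw) (hLε : 2 * Bw * c ≤ ε * L) (hT : Bw * T ≤ ε * n / 2) (hc : 0 ≤ c)
    (hn : 2 * c + 2 ≤ n) (μW : Measure ℝ) [IsProbabilityMeasure μW]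
    (hsupp : μW (Set.Icc 0 Bw) = 1) :
    1 - (∑ k ∈ range L, (((k + 1).choose 2).choose k : ℝ) * (4 * c) ^ k) / (T + 1) ≤
      ((graphMeasure n ⌊c * n⌋₊ μW) {ω | LPM0val n b ω - ε * n ≤ bMatchingVal n b ω}).toReal := by
  have hm : (⌊c * n⌋₊ : ℝ) ≤ c * n := Nat.floor_le (by positivity)
  have hn2 : 2 ≤ n := by
    have : (2 : ℝ) ≤ n := by linarith
    exact_mod_cast this
  have hne := powersetCard_nonempty.2
    (le_card_edgeFinset_top (V := Fin n) (by simpa using hm) (by simp; linarith))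
  refine one_sub_div_le_graphMeasure μW hsupp
    (sum_card_shortCycleUnions_le_of_le_mul L (by simpa using hm) (by simpa using hn2)) hne
    fun E hE hX W hW => ?_
  exact LPM0val_sub_le_bMatchingVal hL hBw hLε hm hT hE hX fun e => (hW e).2

theorem mul_floor_div_le {Bw ε : ℝ} (hBw : 0 ≤ Bw) (hε : 0 ≤ ε) (n : ℕ) :
    Bw * ⌊ε / (2 * Bw + 1) * n⌋₊ ≤ ε * n / 2 := by
  set t := ⌊ε / (2 * Bw + 1) * n⌋₊
  have h : (t : ℝ) ≤ ε / (2 * Bw + 1) * n := Nat.floor_le (by positivity)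
  rw [div_mul_eq_mul_div, le_div_iff₀ (by linarith)] at h
  nlinarith [t.cast_nonneg (α := ℝ)]

theorem tendsto_one_sub_div_floor_add_one (K : ℝ) {δ : ℝ} (hδ : 0 < δ) :
    Tendsto (fun n : ℕ => 1 - K / (⌊δ * n⌋₊ + 1)) atTop (nhds 1) := by
  have h : Tendsto (fun n : ℕ => (⌊δ * n⌋₊ : ℝ) + 1) atTop atTop :=
    tendsto_atTop_add_const_right _ 1 (tendsto_natCast_atTop_atTop.comp
      (tendsto_nat_floor_atTop.comp (tendsto_natCast_atTop_atTop.const_mul_atTop hδ)))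
  simpa using tendsto_const_nhds.sub (tendsto_const_nhds.div_atTop h)

theorem bmatching_lp_relaxation_tight_general
    (c : ℝ) (hc : 0 < c) (b : ℕ)
    (μW : Measure ℝ) [IsProbabilityMeasure μW]
    (Bw : ℝ) (hBw : 0 ≤ Bw) (hsupp : μW (Set.Icc 0 Bw) = 1) :
    (∀ (n : ℕ) (ω : GraphInst n), bMatchingVal n b ω ≤ LPM0val n b ω) ∧
    ∀ ε > (0 : ℝ),
      Tendsto (fun n : ℕ =>
          ((graphMeasure n ⌊c * n⌋₊ μW)
            {ω | LPM0val n b ω - ε * n ≤ bMatchingVal n b ω}).toReal)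
        atTop (nhds 1) := by
  refine ⟨fun n ω => bMatchingVal_le_LPM0val n b ω, fun ε hε => ?_⟩
  obtain ⟨L, hL, hLε⟩ : ∃ L : ℕ, 0 < L ∧ 2 * Bw * c ≤ ε * L :=
    ⟨⌈2 * Bw * c / ε⌉₊ + 1, Nat.succ_pos _, by
      rw [← div_le_iff₀' hε]; push_cast; linarith [Nat.le_ceil (2 * Bw * c / ε)]⟩
  set K := ∑ k ∈ range L, (((k + 1).choose 2).choose k : ℝ) * (4 * c) ^ k
  have hδ : 0 < ε / (2 * Bw + 1) := div_pos hε (by linarith)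
  refine tendsto_of_tendsto_of_tendsto_of_le_of_le' (tendsto_one_sub_div_floor_add_one K hδ)
    tendsto_const_nhds ?_ (Eventually.of_forall fun n => measureReal_le_one)
  filter_upwards [eventually_ge_atTop (⌈2 * c⌉₊ + 2)] with n hn
  have hn' : 2 * c + 2 ≤ n := by
    have : (⌈2 * c⌉₊ + 2 : ℝ) ≤ n := by exact_mod_cast hn
    linarith [Nat.le_ceil (2 * c)]
  exact one_sub_div_le_graphMeasure_lpGap hL hBw hLε (mul_floor_div_le hBw hε.le n) hc.le hn'
    μW hsupp

/-- **The fractional relaxation is asymptotically tight in `G(n, ⌊cn⌋)`.**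
Deterministically `M_w(n,c,b) ≤ LPM⁰(n,c)`, and for every `ε > 0`, with probability tending
to `1`, `LPM⁰(n,c) − εn ≤ M_w(n,c,b)`. -/
theorem bmatching_lp_relaxation_tight
    (c : ℝ) (hc : 0 < c) (b : ℕ) (hb : 1 ≤ b)
    (μW : Measure ℝ) [IsProbabilityMeasure μW]
    (Bw : ℝ) (hBw : 0 ≤ Bw) (hsupp : μW (Set.Icc 0 Bw) = 1) :
    (∀ (n : ℕ) (ω : GraphInst n), bMatchingVal n b ω ≤ LPM0val n b ω) ∧
    ∀ ε > (0 : ℝ),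
      Tendsto (fun n : ℕ =>
          ((graphMeasure n ⌊c * n⌋₊ μW)
            {ω | LPM0val n b ω - ε * n ≤ bMatchingVal n b ω}).toReal)
        atTop (nhds 1) :=
  bmatching_lp_relaxation_tight_general c hc b μW Bw hBw hsupp
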